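/- Let r be a nonnegative integer, and let G be a τ-critical graph with τ(G) = t ≥ r and |V(G)| = n. Let q₁ denote the largest eigenvalue of the signless Laplacian matrix Q(G) = D(G) + A(G) of G. Then n·(r + q₁/4) ≤ (t+r+1 choose 2). -/

import Mathlib

/-!
By Hajnal's theorem a τ-critical graph satisfies `n + Δ(G) ≤ 2τ + 1`, and by Gershgorin's theorem
`q₁ ≤ 2Δ(G)`. Hence `n (r + q₁/4) ≤ n (r + (2τ + 1 - n)/2) = n (2(τ + r) + 1 - n)/2`, and
`a (2b + 1 - a) ≤ b (b + 1)` for all integers `a`, `b` bounds this by `(τ + r)(τ + r + 1)/2`.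
-/

open SimpleGraph

variable {V : Type*}

/-- A transversal set (vertex cover): a set of vertices incident to all edges. -/
def IsTransversal (G : SimpleGraph V) (T : Finset V) : Prop :=
  ∀ ⦃u v : V⦄, G.Adj u v → u ∈ T ∨ v ∈ T

/-- The transversal number `τ(G)`: minimum cardinality of a transversal set. -/
noncomputable def tauNum (G : SimpleGraph V) [Fintype V] : ℕ :=
  sInf {k | ∃ T : Finset V, T.card = k ∧ IsTransversal G T}

/-- `G` is τ-critical: it has no isolated vertex and deleting any edge decreases `τ`. -/
def IsTauCritical (G : SimpleGraph V) [Fintype V] : Prop :=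
  (∀ v : V, ∃ u, G.Adj v u) ∧
    ∀ e ∈ G.edgeSet, tauNum (G.deleteEdges {e}) < tauNum G

/-- `mK2 m` is the disjoint union of `m` copies of `K₂`. -/
def mK2 (m : ℕ) : SimpleGraph (Fin m × Fin 2) where
  Adj x y := x.1 = y.1 ∧ x.2 ≠ y.2
  symm := ⟨fun _ _ ⟨h1, h2⟩ => ⟨h1.symm, h2.symm⟩⟩
  loopless := ⟨fun _ ⟨_, h⟩ => h rfl⟩

/-- The spectral radius `λ₁(G)`: the largest eigenvalue of the adjacency matrix of `G`. -/
noncomputable def specRad (G : SimpleGraph V) [Fintype V] [DecidableEq V]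
    [DecidableRel G.Adj] : ℝ :=
  sSup (spectrum ℝ (G.adjMatrix ℝ))

/-- The signless Laplacian spectral radius `q₁(G)`: the largest eigenvalue of
`Q(G) = D(G) + A(G)`. -/
noncomputable def signlessLapSpecRad (G : SimpleGraph V) [Fintype V] [DecidableEq V]
    [DecidableRel G.Adj] : ℝ :=
  sSup (spectrum ℝ (Matrix.diagonal (fun v => (G.degree v : ℝ)) + G.adjMatrix ℝ))

open Finset

lemma exists_isTransversal_card_eq_tauNum (G : SimpleGraph V) [Fintype V] :
    ∃ T : Finset V, T.card = tauNum G ∧ IsTransversal G T :=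
  Nat.sInf_mem (⟨_, univ, rfl, fun u _ _ => Or.inl (mem_univ u)⟩ :
    {k | ∃ T : Finset V, T.card = k ∧ IsTransversal G T}.Nonempty)

section Transversal

variable {G : SimpleGraph V} [Fintype V]

lemma IsTransversal.tauNum_le {T : Finset V} (hT : IsTransversal G T) : tauNum G ≤ T.card :=
  Nat.sInf_le ⟨T, rfl, hT⟩

/-- `R` is a minimum transversal of `G - uv`; being smaller than `τ(G)`, it avoids `u` and `v`. -/
lemma IsTauCritical.exists_cover_off_edge (hcrit : IsTauCritical G) {u v : V} (huv : G.Adj u v) :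
    ∃ R : Finset V, R.card < tauNum G ∧ u ∉ R ∧ v ∉ R ∧
      ∀ ⦃a b : V⦄, G.Adj a b → s(a, b) ≠ s(u, v) → a ∈ R ∨ b ∈ R := by
  obtain ⟨R, hRcard, hR⟩ := exists_isTransversal_card_eq_tauNum (G.deleteEdges {s(u, v)})
  have hlt : R.card < tauNum G := hRcard ▸ hcrit.2 _ huv
  have hcover : ∀ ⦃a b : V⦄, G.Adj a b → s(a, b) ≠ s(u, v) → a ∈ R ∨ b ∈ R :=
    fun a b hab hne => hR (deleteEdges_adj.2 ⟨hab, hne⟩)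
  have huvR : ¬(u ∈ R ∨ v ∈ R) := fun huvR => hlt.not_ge <| IsTransversal.tauNum_le
    fun a b hab => by
      by_cases hne : s(a, b) = s(u, v)
      · rcases Sym2.eq_iff.mp hne with ⟨rfl, rfl⟩ | ⟨rfl, rfl⟩ <;> tauto
      · exact hcover hab hne
  exact ⟨R, hlt, fun h => huvR (Or.inl h), fun h => huvR (Or.inr h), hcover⟩

end Transversal

lemma Finset.card_sdiff_le_card_inter_of_injOn {α β : Type*} [DecidableEq α] [DecidableEq β]
    {s A : Finset α} {t B : Finset β} {f : α → β} (hf : Set.InjOn f s) (hst : Set.MapsTo f s t)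
    (hcard : t.card ≤ s.card) (hAB : ∀ a ∈ s, a ∉ A → f a ∈ B) :
    (t \ B).card ≤ (s ∩ A).card := by
  have hinj : (s \ A).card ≤ (t ∩ B).card :=
    card_le_card_of_injOn f (fun a ha => by
      obtain ⟨has, haA⟩ := mem_sdiff.1 ha
      exact mem_inter.2 ⟨hst has, hAB a has haA⟩) (hf.mono (by simp))
  have hs := card_sdiff_add_card_inter s A
  have ht := card_sdiff_add_card_inter t B
  omega

def SimpleGraph.nbhd (G : SimpleGraph V) [Fintype V] [DecidableEq V] [DecidableRel G.Adj]
    (S : Finset V) : Finset V :=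
  S.biUnion fun a => G.neighborFinset a

section Hajnal

variable {G : SimpleGraph V} [Fintype V] [DecidableEq V] [DecidableRel G.Adj]

@[simp]
lemma SimpleGraph.mem_nbhd {S : Finset V} {x : V} : x ∈ G.nbhd S ↔ ∃ a ∈ S, G.Adj a x := by
  simp [nbhd]

lemma exists_injOn_adj_of_forall_ssubset {S : Finset V} {v s₀ : V} (hs₀ : s₀ ∈ S)
    (hHall : ∀ T ⊂ S, T.card ≤ (G.nbhd T \ G.neighborFinset v).card) :
    ∃ f : V → V, Set.InjOn f ↑(S.erase s₀) ∧ ∀ a ∈ S.erase s₀, G.Adj a (f a) ∧ ¬G.Adj v (f a) := by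
  obtain ⟨f, hf_inj, hf⟩ := (all_card_le_biUnion_card_iff_exists_injective
      fun a : S.erase s₀ => G.neighborFinset a \ G.neighborFinset v).1 fun A => by
    have hA : A.map (.subtype _) ⊂ S :=
      Finset.ssubset_of_subset_of_ssubset (fun a ha => by
        obtain ⟨a, -, rfl⟩ := mem_map.1 ha
        exact a.2) (erase_ssubset hs₀)
    have h := hHall _ hA
    rw [card_map] at h
    convert h using 2
    ext
    simp only [mem_biUnion, mem_sdiff, mem_nbhd, mem_map, mem_neighborFinset]
    aesop
  refine ⟨fun a => if h : a ∈ S.erase s₀ then f ⟨a, h⟩ else a, fun a ha b hb hab => ?_,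
    fun a ha => ?_⟩
  · simp only [mem_coe.1 ha, mem_coe.1 hb, dif_pos] at hab
    exact congrArg Subtype.val (hf_inj hab)
  · simp only [dif_pos ha]
    simpa using hf ⟨a, ha⟩

lemma disjoint_nbhd_of_isIndepSet {S : Finset V} (hS : G.IsIndepSet S) : Disjoint S (G.nbhd S) :=
  disjoint_left.2 fun b hb hbN => by
    obtain ⟨a, ha, hab⟩ := mem_nbhd.1 hbN
    exact hS ha hb hab.ne hab

/-- `(R ∪ N(S)) \ S` is a transversal of `G` when `R` covers every edge but one meeting `N(S)`. -/
lemma tauNum_add_card_inter_le {S R : Finset V} {p q : V} (hS : G.IsIndepSet S)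
    (hR : ∀ ⦃a b : V⦄, G.Adj a b → s(a, b) ≠ s(p, q) → a ∈ R ∨ b ∈ R) (hp : p ∈ G.nbhd S) :
    tauNum G + (S ∩ R).card ≤ R.card + (G.nbhd S \ R).card := by
  have hdisj := disjoint_nbhd_of_isIndepSet hS
  have hT : IsTransversal G ((R ∪ G.nbhd S) \ S) := by
    intro a b hab
    simp only [mem_sdiff, mem_union]
    by_cases haS : a ∈ S
    · exact Or.inr ⟨Or.inr (mem_nbhd.2 ⟨a, haS, hab⟩), disjoint_left.1 hdisj.symm <|
        mem_nbhd.2 ⟨a, haS, hab⟩⟩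
    by_cases hbS : b ∈ S
    · exact Or.inl ⟨Or.inr (mem_nbhd.2 ⟨b, hbS, hab.symm⟩), haS⟩
    by_cases he : s(a, b) = s(p, q)
    · rcases Sym2.eq_iff.1 he with ⟨rfl, -⟩ | ⟨-, rfl⟩
      · exact Or.inl ⟨Or.inr hp, haS⟩
      · exact Or.inr ⟨Or.inr hp, hbS⟩
    · rcases hR hab he with h | h
      · exact Or.inl ⟨Or.inl h, haS⟩
      · exact Or.inr ⟨Or.inl h, hbS⟩
  have hunion := card_sdiff_add_card (G.nbhd S) R
  have hsplit := card_sdiff_add_card_inter (R ∪ G.nbhd S) S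
  have hinter : (S ∩ R).card ≤ ((R ∪ G.nbhd S) ∩ S).card :=
    card_le_card fun x hx => by simp_all
  have htau := hT.tauNum_le
  rw [union_comm] at hunion
  omega

lemma card_nbhd_sdiff_sdiff_le {S R : Finset V} {v s₀ p q : V} (hs₀ : s₀ ∈ S)
    (hHall : ∀ T ⊂ S, T.card ≤ (G.nbhd T \ G.neighborFinset v).card)
    (hlt : (G.nbhd S \ G.neighborFinset v).card < S.card)
    (hR : ∀ ⦃a b : V⦄, G.Adj a b → s(a, b) ≠ s(p, q) → a ∈ R ∨ b ∈ R)
    (hp : p ∉ S.erase s₀) (hq : q ∉ S.erase s₀) :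
    ((G.nbhd S \ G.neighborFinset v) \ R).card ≤ (S.erase s₀ ∩ R).card := by
  obtain ⟨f, hf_inj, hf⟩ := exists_injOn_adj_of_forall_ssubset hs₀ hHall
  refine card_sdiff_le_card_inter_of_injOn hf_inj (fun a ha => ?_) ?_ fun a ha haR => ?_
  · obtain ⟨hadj, hvf⟩ := hf a ha
    simpa [hvf] using ⟨a, mem_of_mem_erase ha, hadj⟩
  · rw [card_erase_of_mem hs₀]
    omega
  · have hne : s(a, f a) ≠ s(p, q) := by
      intro he
      rcases Sym2.eq_iff.1 he with ⟨rfl, -⟩ | ⟨rfl, -⟩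
      exacts [hp ha, hq ha]
    exact (hR (hf a ha).1 hne).resolve_left haR

/-- Hajnal's lemma. A minimal counterexample `S` has, by Hall's theorem, a matching of `S - s₀`
into `N(S) \ N(v)` for each `s₀ ∈ S`; deleting a suitable edge at `N(S)` then yields a
transversal `(R ∪ N(S)) \ S` of `G` with fewer than `τ(G)` vertices. -/
theorem IsTauCritical.card_le_card_nbhd_sdiff (hcrit : IsTauCritical G) (v : V) :
    ∀ S : Finset V, G.IsIndepSet S → v ∉ S → (∀ a ∈ S, ¬G.Adj v a) →
      S.card ≤ (G.nbhd S \ G.neighborFinset v).card := by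
  intro S
  induction S using Finset.strongInduction with
  | H S ih =>
  intro hS hvS hvS_adj
  by_contra! hlt
  have hHall : ∀ T ⊂ S, T.card ≤ (G.nbhd T \ G.neighborFinset v).card := fun T hT =>
    ih T hT (hS.mono (coe_subset.2 hT.subset)) (fun h => hvS (hT.subset h))
      fun a ha => hvS_adj a (hT.subset ha)
  have hdisj := disjoint_nbhd_of_isIndepSet hS
  suffices ∃ (R : Finset V) (p q : V), R.card < tauNum G ∧ p ∈ G.nbhd S ∧
      (∀ ⦃a b : V⦄, G.Adj a b → s(a, b) ≠ s(p, q) → a ∈ R ∨ b ∈ R) ∧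
      (G.nbhd S \ R).card ≤ (S ∩ R).card by
    obtain ⟨R, p, q, hRcard, hp, hR, hcount⟩ := this
    have htau := tauNum_add_card_inter_le hS hR hp
    omega
  by_cases hmeet : ∃ x ∈ G.nbhd S, G.Adj v x
  · obtain ⟨x, hxN, hvx⟩ := hmeet
    obtain ⟨s₀, hs₀, hs₀x⟩ := mem_nbhd.1 hxN
    obtain ⟨R, hRcard, hxR, hvR, hR⟩ := hcrit.exists_cover_off_edge hvx.symm
    have hs₀R : s₀ ∈ R := by
      refine (hR hs₀x fun he => ?_).resolve_right hxR
      rcases Sym2.eq_iff.1 he with ⟨rfl, -⟩ | ⟨rfl, -⟩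
      exacts [disjoint_left.1 hdisj hs₀ hxN, hvS hs₀]
    have hcount := card_nbhd_sdiff_sdiff_le hs₀ hHall hlt hR
      (fun h => disjoint_left.1 hdisj (mem_of_mem_erase h) hxN) (fun h => hvS (mem_of_mem_erase h))
    have hsub : G.nbhd S \ R ⊆ insert x ((G.nbhd S \ G.neighborFinset v) \ R) := by
      intro z hz
      obtain ⟨hzN, hzR⟩ := mem_sdiff.1 hz
      by_cases hvz : G.Adj v z
      · by_cases hzx : z = x
        · exact hzx ▸ mem_insert_self _ _
        · have hne : s(z, v) ≠ s(x, v) := fun he => by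
            rcases Sym2.eq_iff.1 he with ⟨h, -⟩ | ⟨h, -⟩
            exacts [hzx h, hvz.ne h.symm]
          exact absurd ((hR hvz.symm hne).resolve_right hvR) hzR
      · exact mem_insert_of_mem (by simp [hzN, hzR, hvz])
    refine ⟨R, x, v, hRcard, hxN, hR, ?_⟩
    rw [erase_inter, card_erase_of_mem (mem_inter.2 ⟨hs₀, hs₀R⟩)] at hcount
    have hsubcard := card_le_card hsub
    have hinsert := card_insert_le x ((G.nbhd S \ G.neighborFinset v) \ R)
    have hpos : 0 < (S ∩ R).card := card_pos.2 ⟨s₀, mem_inter.2 ⟨hs₀, hs₀R⟩⟩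
    omega
  · push Not at hmeet
    obtain ⟨s₀, hs₀⟩ := card_pos.1 (by omega : 0 < S.card)
    obtain ⟨y, hs₀y⟩ := hcrit.1 s₀
    have hyN : y ∈ G.nbhd S := mem_nbhd.2 ⟨s₀, hs₀, hs₀y⟩
    obtain ⟨R, hRcard, -, -, hR⟩ := hcrit.exists_cover_off_edge hs₀y.symm
    have hcount := card_nbhd_sdiff_sdiff_le hs₀ hHall hlt hR
      (fun h => disjoint_left.1 hdisj (mem_of_mem_erase h) hyN) (notMem_erase s₀ S)
    have hsub : G.nbhd S \ R ⊆ (G.nbhd S \ G.neighborFinset v) \ R := fun z hz => by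
      have hvz := hmeet z (mem_sdiff.1 hz).1
      simp_all
    refine ⟨R, y, s₀, hRcard, hyN, hR, ?_⟩
    calc (G.nbhd S \ R).card ≤ _ := card_le_card hsub
      _ ≤ _ := hcount
      _ ≤ (S ∩ R).card := card_le_card (inter_subset_inter_right (erase_subset _ _))

/-- For a critical edge `uv` with `R` a minimum transversal of `G - uv`, the vertices outside
`R ∪ {u, v}` form an independent set whose neighbourhood lies in `R`; Hajnal's lemma counts
them. -/
theorem IsTauCritical.card_add_degree_le (hcrit : IsTauCritical G) (v : V) :
    Fintype.card V + G.degree v ≤ 2 * tauNum G + 1 := by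
  obtain ⟨u, hvu⟩ := hcrit.1 v
  obtain ⟨R, hRcard, hvR, huR, hR⟩ := hcrit.exists_cover_off_edge hvu
  have hcover : ∀ ⦃a b : V⦄, G.Adj a b → a ≠ u → a ≠ v → a ∈ R ∨ b ∈ R := fun a b hab hau hav =>
    hR hab fun he => by rcases Sym2.eq_iff.1 he with ⟨h, -⟩ | ⟨h, -⟩ <;> contradiction
  set J := insert u (insert v R)
  have hJ : J.card = R.card + 2 := by
    rw [card_insert_of_notMem (by simp [huR, hvu.ne.symm]), card_insert_of_notMem hvR]
  set I := Jᶜ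
  have hmemI : ∀ {a}, a ∈ I ↔ a ≠ u ∧ a ≠ v ∧ a ∉ R := by simp [I, J]
  have hI : G.IsIndepSet I := fun a ha b hb _ hab => by
    obtain ⟨hau, hav, haR⟩ := hmemI.1 ha
    exact (hcover hab hau hav).elim haR (hmemI.1 hb).2.2
  have hvI : ∀ a ∈ I, ¬G.Adj v a := fun a ha hva => by
    obtain ⟨hau, hav, haR⟩ := hmemI.1 ha
    exact (hcover hva.symm hau hav).elim haR hvR
  have hNI : G.nbhd I \ G.neighborFinset v ⊆ R \ G.neighborFinset v := fun z hz => by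
    obtain ⟨hzN, hzv⟩ := mem_sdiff.1 hz
    obtain ⟨a, ha, haz⟩ := mem_nbhd.1 hzN
    obtain ⟨hau, hav, haR⟩ := hmemI.1 ha
    exact mem_sdiff.2 ⟨(hcover haz hau hav).resolve_left haR, hzv⟩
  have hNv : (G.neighborFinset v).erase u ⊆ R ∩ G.neighborFinset v := fun z hz => by
    obtain ⟨hzu, hzN⟩ := mem_erase.1 hz
    have hvz := (G.mem_neighborFinset _ _).1 hzN
    exact mem_inter.2 ⟨(hcover hvz.symm hzu hvz.ne.symm).resolve_right hvR, hzN⟩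
  have hHajnal := hcrit.card_le_card_nbhd_sdiff v I hI (fun h => (hmemI.1 h).2.1 rfl) hvI
  have hIcard : I.card = Fintype.card V - J.card := card_compl J
  have hJV := card_le_univ J
  have hNIcard := card_le_card hNI
  have hNvcard := card_le_card hNv
  have hRsplit := card_sdiff_add_card_inter R (G.neighborFinset v)
  rw [card_erase_of_mem ((G.mem_neighborFinset _ _).2 hvu), card_neighborFinset_eq_degree]
    at hNvcard
  omega

end Hajnal

theorem IsTauCritical.card_add_maxDegree_le {G : SimpleGraph V} [Fintype V] [DecidableRel G.Adj]
    (hcrit : IsTauCritical G) : Fintype.card V + G.maxDegree ≤ 2 * tauNum G + 1 := by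
  classical
  cases isEmpty_or_nonempty V
  · simp
  · obtain ⟨v, hv⟩ := G.exists_maximal_degree_vertex
    exact hv ▸ hcrit.card_add_degree_le v

/-- Gershgorin: the row of `Q(G)` at `k` has diagonal entry and off-diagonal absolute sum both
equal to `deg k`. -/
theorem signlessLapSpecRad_le_two_mul_maxDegree (G : SimpleGraph V) [Fintype V] [DecidableEq V]
    [DecidableRel G.Adj] : signlessLapSpecRad G ≤ 2 * G.maxDegree := by
  refine Real.sSup_le (fun μ hμ => ?_) (by positivity)
  set Q := Matrix.diagonal (fun v => (G.degree v : ℝ)) + G.adjMatrix ℝ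
  obtain ⟨k, hk⟩ := eigenvalue_mem_ball (A := Q)
    (Module.End.HasEigenvalue.of_mem_spectrum (by rwa [Matrix.spectrum_toLin']))
  have hdiag : Q k k = G.degree k := by simp [Q]
  have hrow : ∑ j ∈ univ.erase k, ‖Q k j‖ = G.degree k := by
    have hoff : ∀ j ∈ univ.erase k, ‖Q k j‖ = G.adjMatrix ℝ k j := fun j hj => by
      simp [Q, Matrix.diagonal_apply_ne _ (ne_of_mem_erase hj).symm, adjMatrix_apply,
        apply_ite]
    rw [sum_congr rfl hoff, sum_erase _ (by simp)]
    simp [adjMatrix_apply, ← card_neighborFinset_eq_degree, neighborFinset_eq_filter]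
  have hk' := (abs_le.1 (Real.dist_eq _ _ ▸ Metric.mem_closedBall.1 hk)).2
  have hdeg : (G.degree k : ℝ) ≤ G.maxDegree := by exact_mod_cast G.degree_le_maxDegree k
  rw [hdiag, hrow] at hk'
  linarith

/-- `(b - a)(b - a + 1) ≥ 0`, a product of consecutive integers, rearranged. -/
lemma Int.mul_two_mul_add_one_sub_le (a b : ℤ) : a * (2 * b + 1 - a) ≤ b * (b + 1) := by
  have hconsec : 0 ≤ (b - a) * (b - a + 1) := by
    rcases le_or_gt 0 (b - a) with h | h
    · positivity
    · exact mul_nonneg_of_nonpos_of_nonpos h.le (by omega)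
  nlinarith

theorem tau_critical_card_mul_r_add_quarter_q1_le_general (G : SimpleGraph V) [Fintype V]
    [DecidableEq V] [DecidableRel G.Adj] (t n r : ℕ) (hcrit : IsTauCritical G)
    (ht : tauNum G = t) (hn : Fintype.card V = n) :
    (n : ℝ) * (r + signlessLapSpecRad G / 4) ≤ ((t + r + 1).choose 2 : ℝ) := by
  have hHajnal : (n : ℝ) + G.maxDegree ≤ 2 * t + 1 := by
    rw [← hn, ← ht]
    exact_mod_cast hcrit.card_add_maxDegree_le
  have hq := signlessLapSpecRad_le_two_mul_maxDegree G
  have hquad : (n : ℝ) * (2 * (t + r) + 1 - n) ≤ (t + r) * (t + r + 1) := by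
    exact_mod_cast Int.mul_two_mul_add_one_sub_le n (t + r)
  rw [Nat.cast_choose_two]
  push_cast
  calc (n : ℝ) * (r + signlessLapSpecRad G / 4) ≤ n * (r + G.maxDegree / 2) :=
        mul_le_mul_of_nonneg_left (by linarith) n.cast_nonneg
    _ ≤ n * (r + (2 * t + 1 - n) / 2) :=
        mul_le_mul_of_nonneg_left (by linarith) n.cast_nonneg
    _ = n * (2 * (t + r) + 1 - n) / 2 := by ring
    _ ≤ (t + r + 1) * (t + r + 1 - 1) / 2 := by linarith

/-- For a nonnegative integer `r` and a τ-critical graph `G` with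
`τ(G) = t ≥ r` and `|V(G)| = n`, we have `n·(r + q₁/4) ≤ (t+r+1 choose 2)`. -/
theorem tau_critical_card_mul_r_add_quarter_q1_le (G : SimpleGraph V) [Fintype V]
    [DecidableEq V] [DecidableRel G.Adj] (t n r : ℕ) (hcrit : IsTauCritical G)
    (ht : tauNum G = t) (hn : Fintype.card V = n) (hr : r ≤ t) :
    (n : ℝ) * (r + signlessLapSpecRad G / 4) ≤ ((t + r + 1).choose 2 : ℝ) :=
  tau_critical_card_mul_r_add_quarter_q1_le_general G t n r hcrit ht hn
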